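/- arXiv:2507.03725 — 2 statements merged into one kernel-verified Lean document; each statement's English description precedes it below -/
import Mathlib

section
/- Let psi: N -> [0, infinity) be increasing with psi(0) = 0 and suppose psi(n) = O(n^z) for some z > 0, and suppose psi(n) = Omega(n^{l/4}) and psi(n) = o(n^{(l+1)/4}) for some nonnegative integer l. Fix a proportion and set Q = Q(n) <= n. Then the Lyapunov condition of order delta = 2 holds for the independent random variables W_1,...,W_{n-Q} where W_j = ± psi(j) with probability 1/2 each: (sum_{j=1}^{n-Q} psi(j)^4) / (sum_{j=1}^{n-Q} psi(j)^2)^2 -> 0 as n -> infinity, provided n - Q -> infinity. -/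
/-!
By monotonicity, `∑_{j ≤ m} ψ(j)⁴ ≤ m ψ(m)⁴`, while the upper half of the range alone gives
`∑_{j ≤ m} ψ(j)² ≥ (m/2) ψ(⌊m/2⌋)²`. The lower growth bound makes `ψ(⌊m/2⌋)⁴ ≳ m^l`, so the
ratio is `O(ψ(m)⁴ / m^{l+1})`, which tends to `0` by the upper growth bound; finally compose
with `n ↦ n - Q n → ∞`.
-/

open Finset Filter Asymptotics Topology

section MonotoneSums

variable {f : ℕ → ℝ}

theorem sum_Icc_le_mul_of_monotone (hf : Monotone f) (m : ℕ) :
    ∑ j ∈ Icc 1 m, f j ≤ m * f m := by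
  simpa using sum_le_card_nsmul (Icc 1 m) f (f m) fun j hj => hf (mem_Icc.1 hj).2

theorem half_mul_le_sum_Icc_of_monotone (hf : Monotone f) (hf0 : ∀ j, 0 ≤ f j) (m : ℕ) :
    (m : ℝ) / 2 * f (m / 2) ≤ ∑ j ∈ Icc 1 m, f j := by
  have hcard : (m : ℝ) / 2 ≤ #(Ioc (m / 2) m) := by
    rw [Nat.card_Ioc]
    have : (m : ℝ) ≤ 2 * (m - m / 2 : ℕ) := by exact_mod_cast (by omega : m ≤ 2 * (m - m / 2))
    linarith
  calc (m : ℝ) / 2 * f (m / 2) ≤ #(Ioc (m / 2) m) * f (m / 2) := by gcongr; exact hf0 _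
    _ ≤ ∑ j ∈ Ioc (m / 2) m, f j := by
        simpa using card_nsmul_le_sum _ _ _ fun j hj => hf (mem_Ioc.1 hj).1.le
    _ ≤ ∑ j ∈ Icc 1 m, f j :=
        sum_le_sum_of_subset_of_nonneg (fun j hj => by simp only [mem_Ioc, mem_Icc] at hj ⊢; omega) fun j _ _ => hf0 j

end MonotoneSums

theorem rpow_natCast_div_four_pow_four {x : ℝ} (hx : 0 ≤ x) (n : ℕ) :
    (x ^ ((n : ℝ) / 4)) ^ 4 = x ^ n := by
  rw [← Real.rpow_mul_natCast hx, ← Real.rpow_natCast]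
  norm_num

section SignedRank

variable {ψ : ℕ → ℝ}

theorem sum_pow_four_mul_le_sq_sum_sq (hψ : Monotone ψ) (hψ0 : ∀ j, 0 ≤ ψ j) (m : ℕ) :
    (∑ j ∈ Icc 1 m, ψ j ^ 4) * (m * ψ (m / 2) ^ 4) ≤
      4 * ψ m ^ 4 * (∑ j ∈ Icc 1 m, ψ j ^ 2) ^ 2 := by
  have hmono (n : ℕ) : Monotone (ψ · ^ n) := fun a b hab => pow_le_pow_left₀ (hψ0 a) (hψ hab) n
  have hsum4 := sum_Icc_le_mul_of_monotone (hmono 4) m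
  have hsum2 := half_mul_le_sum_Icc_of_monotone (hmono 2) (fun j => by positivity) m
  calc (∑ j ∈ Icc 1 m, ψ j ^ 4) * (m * ψ (m / 2) ^ 4)
      ≤ m * ψ m ^ 4 * (m * ψ (m / 2) ^ 4) := by gcongr
    _ = 4 * ψ m ^ 4 * ((m : ℝ) / 2 * ψ (m / 2) ^ 2) ^ 2 := by ring
    _ ≤ 4 * ψ m ^ 4 * (∑ j ∈ Icc 1 m, ψ j ^ 2) ^ 2 := by gcongr

theorem exists_pos_eventually_mul_pow_le_pow_four_half {l : ℕ}
    (hΩ : (fun m : ℕ => (m : ℝ) ^ ((l : ℝ) / 4)) =O[atTop] ψ) :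
    ∃ c > 0, ∀ᶠ m : ℕ in atTop, c * (m : ℝ) ^ l ≤ ψ (m / 2) ^ 4 := by
  have hpow : (fun m : ℕ => (m : ℝ) ^ l) =O[atTop] fun m => ψ m ^ 4 := by
    simpa [rpow_natCast_div_four_pow_four] using hΩ.pow 4
  have hhalf : (fun m : ℕ => (m : ℝ)) =O[atTop] fun m => ((m / 2 : ℕ) : ℝ) :=
    IsBigO.of_bound 3 <| (eventually_ge_atTop 2).mono fun m hm => by
      simp only [Real.norm_natCast]
      exact_mod_cast (by omega : m ≤ 3 * (m / 2))
  obtain ⟨C, hC, hbound⟩ :=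
    ((hhalf.pow l).trans (hpow.comp_tendsto (Nat.tendsto_div_const_atTop two_ne_zero))).exists_pos
  refine ⟨C⁻¹, inv_pos.2 hC, hbound.bound.mono fun m hm => ?_⟩
  rw [inv_mul_le_iff₀ hC]
  simpa [Even.pow_abs (by decide : Even 4)] using hm

theorem tendsto_sum_pow_four_div_sq_sum_sq (hψ : Monotone ψ) (hψ0 : ∀ j, 0 ≤ ψ j) {l : ℕ}
    (hΩ : (fun m : ℕ => (m : ℝ) ^ ((l : ℝ) / 4)) =O[atTop] ψ)
    (ho : ψ =o[atTop] fun m : ℕ => (m : ℝ) ^ (((l : ℝ) + 1) / 4)) :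
    Tendsto (fun m : ℕ => (∑ j ∈ Icc 1 m, ψ j ^ 4) / (∑ j ∈ Icc 1 m, ψ j ^ 2) ^ 2)
      atTop (𝓝 0) := by
  obtain ⟨c, hc, hlow⟩ := exists_pos_eventually_mul_pow_le_pow_four_half hΩ
  have hsmall : Tendsto (fun m : ℕ => ψ m ^ 4 / (m : ℝ) ^ (l + 1)) atTop (𝓝 0) := by
    have hpow (m : ℕ) : ((m : ℝ) ^ (((l : ℝ) + 1) / 4)) ^ 4 = (m : ℝ) ^ (l + 1) := by
      exact_mod_cast rpow_natCast_div_four_pow_four (Nat.cast_nonneg m) (l + 1)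
    simpa only [hpow] using (ho.pow four_pos).tendsto_div_nhds_zero
  refine squeeze_zero' (Eventually.of_forall fun m => ?_) ?_
    (by simpa using hsmall.const_mul (4 / c))
  · exact div_nonneg (sum_nonneg fun j _ => by positivity) (sq_nonneg _)
  filter_upwards [hlow, eventually_ge_atTop 1] with m hm hm1
  have hS4 : 0 ≤ ∑ j ∈ Icc 1 m, ψ j ^ 4 := sum_nonneg fun j _ => by positivity
  have hkey : (∑ j ∈ Icc 1 m, ψ j ^ 4) * (c * (m : ℝ) ^ (l + 1)) ≤
      4 * ψ m ^ 4 * (∑ j ∈ Icc 1 m, ψ j ^ 2) ^ 2 := by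
    have hden : c * (m : ℝ) ^ (l + 1) ≤ m * ψ (m / 2) ^ 4 := by
      rw [pow_succ', mul_left_comm]
      gcongr
    exact (mul_le_mul_of_nonneg_left hden hS4).trans (sum_pow_four_mul_le_sq_sum_sq hψ hψ0 m)
  rcases (sq_nonneg (∑ j ∈ Icc 1 m, ψ j ^ 2)).eq_or_lt with hS2 | hS2
  · rw [← hS2, div_zero]
    positivity
  · rw [← mul_div_mul_comm, div_le_div_iff₀ hS2 (by positivity)]
    linarith

end SignedRank

theorem lyapunov_condition_signed_rank_general (ψ : ℕ → ℝ) (hmono : Monotone ψ)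
    (hnonneg : ∀ m, 0 ≤ ψ m)
    (l : ℕ)
    (hΩ : (fun m : ℕ => (m : ℝ) ^ ((l : ℝ) / 4)) =O[atTop] fun m : ℕ => ψ m)
    (ho : (fun m : ℕ => ψ m) =o[atTop] fun m : ℕ => (m : ℝ) ^ (((l : ℝ) + 1) / 4))
    (Q : ℕ → ℕ)
    (hgrow : Tendsto (fun n => n - Q n) atTop atTop) :
    Tendsto (fun n : ℕ =>
      (∑ j ∈ Finset.Icc 1 (n - Q n), ψ j ^ 4) /
        (∑ j ∈ Finset.Icc 1 (n - Q n), ψ j ^ 2) ^ 2) atTop (nhds 0) :=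
  (tendsto_sum_pow_four_div_sq_sum_sq hmono hnonneg hΩ ho).comp hgrow

/-- Lyapunov condition of order `δ = 2` for the symmetric two-point variables
`W_j = ±ψ(j)`: if `ψ` is nonnegative increasing with `ψ(0) = 0`, grows polynomially,
is `Ω(n^{l/4})` and `o(n^{(l+1)/4})` for some `l : ℕ`, and `n − Q(n) → ∞` with
`Q(n) ≤ n`, then `(∑_{j=1}^{n−Q} ψ(j)⁴) / (∑_{j=1}^{n−Q} ψ(j)²)² → 0`. -/
theorem lyapunov_condition_signed_rank (ψ : ℕ → ℝ) (hmono : Monotone ψ)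
    (hnonneg : ∀ m, 0 ≤ ψ m) (hzero : ψ 0 = 0)
    (hO : ∃ z : ℝ, 0 < z ∧ (fun m : ℕ => ψ m) =O[atTop] fun m : ℕ => (m : ℝ) ^ z)
    (l : ℕ)
    (hΩ : (fun m : ℕ => (m : ℝ) ^ ((l : ℝ) / 4)) =O[atTop] fun m : ℕ => ψ m)
    (ho : (fun m : ℕ => ψ m) =o[atTop] fun m : ℕ => (m : ℝ) ^ (((l : ℝ) + 1) / 4))
    (Q : ℕ → ℕ) (hQ : ∀ n, Q n ≤ n)
    (hgrow : Tendsto (fun n => n - Q n) atTop atTop) :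
    Tendsto (fun n : ℕ =>
      (∑ j ∈ Finset.Icc 1 (n - Q n), ψ j ^ 4) /
        (∑ j ∈ Finset.Icc 1 (n - Q n), ψ j ^ 2) ^ 2) atTop (nhds 0) :=
  lyapunov_condition_signed_rank_general ψ hmono hnonneg l hΩ ho Q hgrow
end

section
/- Let T: D_n -> R be a statistic on databases of size n with finite global sensitivity GS(T) = sup over adjacent databases of |T(y) - T(z)|. If Z has a standard Laplace distribution (density (1/2) exp(-|t|)), then the randomized output T(x) + (GS(T)/epsilon) * Z is epsilon-differentially private: for all adjacent databases y, z and all measurable sets S, P(T(y) + (GS(T)/epsilon) Z in S) <= e^{epsilon} * P(T(z) + (GS(T)/epsilon) Z in S). -/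
open MeasureTheory
open scoped ENNReal

/-- Two databases of size `n` are adjacent if they differ in exactly one entry. -/
def AdjacentDB {n : ℕ} (y z : Fin n → ℝ) : Prop :=
  ∃ i : Fin n, y i ≠ z i ∧ ∀ j : Fin n, j ≠ i → y j = z j

/-!
Translating the noise by `s` moves the output from `T y + c Z` to `T z + c Z` when
`s = (T y - T z) / c`, and `|s| ≤ ε` once `c = Δ / ε`. Since Lebesgue measure is
translation invariant, it suffices to compare the Laplace density with its translate pointwise:
`e^{-|t|} ≤ e^ε e^{-|t + s|}` by the triangle inequality.
-/

theorem withDensity_preimage_add_right_le {G : Type*} [MeasurableSpace G] [AddGroup G]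
    [MeasurableAdd G] (μ : Measure G) [SFinite μ] [μ.IsAddRightInvariant] {f : G → ℝ≥0∞}
    (hf : Measurable f) {s : G} {C : ℝ≥0∞} (hfC : ∀ t, f t ≤ C * f (t + s))
    (B : Set G) :
    μ.withDensity f ((· + s) ⁻¹' B) ≤ C * μ.withDensity f B := by
  have hshift : MeasurePreserving (· + s) μ μ := measurePreserving_add_right μ s
  have hemb : MeasurableEmbedding (· + s) := (MeasurableEquiv.addRight s).measurableEmbedding
  calc μ.withDensity f ((· + s) ⁻¹' B)
      = ∫⁻ t in (· + s) ⁻¹' B, f t ∂μ := withDensity_apply' f _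
    _ ≤ ∫⁻ t in (· + s) ⁻¹' B, C * f (t + s) ∂μ := lintegral_mono hfC
    _ = C * ∫⁻ t in (· + s) ⁻¹' B, f (t + s) ∂μ :=
        lintegral_const_mul C (hf.comp (measurable_add_const s))
    _ = C * ∫⁻ t in B, f t ∂μ := by rw [hshift.setLIntegral_comp_preimage_emb hemb]
    _ = C * μ.withDensity f B := by rw [withDensity_apply' f B]

theorem laplace_density_le_exp_mul_shift {s ε : ℝ} (hs : |s| ≤ ε) (t : ℝ) :
    ENNReal.ofReal ((1 / 2) * Real.exp (-|t|))
      ≤ ENNReal.ofReal (Real.exp ε) * ENNReal.ofReal ((1 / 2) * Real.exp (-|t + s|)) := by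
  rw [← ENNReal.ofReal_mul (Real.exp_nonneg ε)]
  apply ENNReal.ofReal_le_ofReal
  have htri : |t + s| ≤ |t| + |s| := abs_add_le t s
  calc (1 / 2) * Real.exp (-|t|) ≤ (1 / 2) * Real.exp (ε + -|t + s|) := by gcongr; linarith
    _ = Real.exp ε * ((1 / 2) * Real.exp (-|t + s|)) := by rw [Real.exp_add]; ring

theorem laplace_mechanism_dp_general {n : ℕ} (T : (Fin n → ℝ) → ℝ) (Δ ε : ℝ)
    (hΔ : 0 < Δ) (hε : 0 < ε)
    (hsens : ∀ y z : Fin n → ℝ, AdjacentDB y z → |T y - T z| ≤ Δ)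
    {Ω : Type*} [MeasureSpace Ω] (μ : Measure Ω)
    (Z : Ω → ℝ) (hZmeas : Measurable Z)
    (hZlaw : μ.map Z =
      MeasureTheory.volume.withDensity fun t => ENNReal.ofReal ((1 / 2) * Real.exp (-|t|))) :
    ∀ y z : Fin n → ℝ, AdjacentDB y z → ∀ S : Set ℝ, MeasurableSet S →
      μ {ω | T y + (Δ / ε) * Z ω ∈ S}
        ≤ ENNReal.ofReal (Real.exp ε) * μ {ω | T z + (Δ / ε) * Z ω ∈ S} := by
  intro y z hadj S hS
  set c := Δ / ε
  have hc : 0 < c := div_pos hΔ hε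
  have houtput (a : ℝ) : μ {ω | a + c * Z ω ∈ S} = μ.map Z ((a + c * ·) ⁻¹' S) :=
    (Measure.map_apply hZmeas ((measurable_const_add a).comp (measurable_const_mul c) hS)).symm
  set s := (T y - T z) / c
  have hs : |s| ≤ ε := by
    rw [abs_div, abs_of_pos hc, div_le_iff₀ hc, mul_div_cancel₀ Δ hε.ne']
    exact hsens y z hadj
  have hshift : (T y + c * ·) ⁻¹' S = (· + s) ⁻¹' ((T z + c * ·) ⁻¹' S) := by
    ext t
    simp only [Set.mem_preimage, s, mul_add, mul_div_cancel₀ _ hc.ne']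
    ring_nf
  rw [houtput, houtput, hshift, hZlaw]
  exact withDensity_preimage_add_right_le volume (by fun_prop)
    (laplace_density_le_exp_mul_shift hs) _

/-- The Laplace mechanism: if `T` has global sensitivity at most `Δ > 0` over adjacent
databases, and `Z` is a standard Laplace random variable (density `½ e^{−|t|}`), then
`T(x) + (Δ/ε) Z` is `ε`-differentially private. -/
theorem laplace_mechanism_dp {n : ℕ} (T : (Fin n → ℝ) → ℝ) (Δ ε : ℝ)
    (hΔ : 0 < Δ) (hε : 0 < ε)
    (hsens : ∀ y z : Fin n → ℝ, AdjacentDB y z → |T y - T z| ≤ Δ)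
    {Ω : Type*} [MeasureSpace Ω] (μ : Measure Ω) [IsProbabilityMeasure μ]
    (Z : Ω → ℝ) (hZmeas : Measurable Z)
    (hZlaw : μ.map Z =
      MeasureTheory.volume.withDensity fun t => ENNReal.ofReal ((1 / 2) * Real.exp (-|t|))) :
    ∀ y z : Fin n → ℝ, AdjacentDB y z → ∀ S : Set ℝ, MeasurableSet S →
      μ {ω | T y + (Δ / ε) * Z ω ∈ S}
        ≤ ENNReal.ofReal (Real.exp ε) * μ {ω | T z + (Δ / ε) * Z ω ∈ S} :=
  laplace_mechanism_dp_general T Δ ε hΔ hε hsens μ Z hZmeas hZlaw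
end
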